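/- arXiv:2401.03299 — 4 statements merged into one kernel-verified Lean document; each statement's English description precedes it below -/
import Mathlib

section
/- Let α > 0 and β > 0 be real numbers, let a, k be integers with k ≥ a. Then the nabla fractional sum of order α based at a of the Taylor monomial H_{β−1}(·,a) equals H_{α+β−1}(k,a); explicitly, Σ_{s=a+1}^{k} H_{α−1}(k, s−1)·H_{β−1}(s, a) = H_{α+β−1}(k, a). Equivalently, setting m = k − a: Σ_{s=1}^{m} [Γ(m−s+α)/(Γ(m−s+1)·Γ(α))]·[Γ(s+β−1)/(Γ(s)·Γ(β))] = Γ(m+α+β−1)/(Γ(m)·Γ(α+β)) for every integer m ≥ 1. -/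
/-- Nabla fractional Taylor monomial `H_γ(k,a)`. -/
noncomputable def H (γ : ℝ) (k a : ℤ) : ℝ :=
  if 1 ≤ k - a then
    Real.Gamma ((k : ℝ) - (a : ℝ) + γ) / (Real.Gamma ((k : ℝ) - (a : ℝ)) * Real.Gamma (γ + 1))
  else 0

/-- Auxiliary coefficient `c γ n = Γ(n+γ)/(n! Γ(γ))`. -/
noncomputable def c (γ : ℝ) (n : ℕ) : ℝ :=
  Real.Gamma (n + γ) / (n.factorial * Real.Gamma γ)

lemma c_succ {γ : ℝ} (hγ : 0 < γ) (n : ℕ) :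
    ((n : ℝ) + 1) * c γ (n + 1) = ((n : ℝ) + γ) * c γ n := by
  have h : ((n : ℝ) + γ) ≠ 0 := by positivity
  have hG : Real.Gamma ((n : ℝ) + 1 + γ) = ((n : ℝ) + γ) * Real.Gamma ((n : ℝ) + γ) := by
    rw [show (n : ℝ) + 1 + γ = ((n : ℝ) + γ) + 1 by ring, Real.Gamma_add_one h]
  simp only [c, Nat.factorial_succ, Nat.cast_succ, Nat.cast_mul, hG]
  have h1 : ((n : ℝ) + 1) ≠ 0 := by positivity
  field_simp

lemma key_conv (α β : ℝ) (hα : 0 < α) (hβ : 0 < β) (n : ℕ) :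
    ∑ j ∈ Finset.range (n + 1), c α (n - j) * c β j = c (α + β) n := by
  induction n with
  | zero =>
    have hβ' : Real.Gamma β ≠ 0 := (Real.Gamma_pos_of_pos hβ).ne'
    have hα' : Real.Gamma α ≠ 0 := (Real.Gamma_pos_of_pos hα).ne'
    have hab : Real.Gamma (α + β) ≠ 0 := (Real.Gamma_pos_of_pos (by linarith)).ne'
    simp [c]
    field_simp
  | succ n ih =>
    have hne : ((n : ℝ) + 1) ≠ 0 := by positivity
    apply mul_left_cancel₀ hne
    have sum1 : ∑ j ∈ Finset.range (n + 2), ((n + 1 - j : ℕ) : ℝ) * (c α (n + 1 - j) * c β j)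
        = ∑ j ∈ Finset.range (n + 1), (((n - j : ℕ) : ℝ) + α) * (c α (n - j) * c β j) := by
      rw [Finset.sum_range_succ]
      simp only [Nat.sub_self, Nat.cast_zero, zero_mul, add_zero]
      apply Finset.sum_congr rfl
      intro j hj
      have hj' : j ≤ n := by simpa [Nat.lt_succ_iff] using hj
      have h1 : n + 1 - j = (n - j) + 1 := by omega
      rw [h1]
      push_cast
      rw [← mul_assoc, c_succ hα, mul_assoc]
    have sum2 : ∑ j ∈ Finset.range (n + 2), ((j : ℕ) : ℝ) * (c α (n + 1 - j) * c β j)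
        = ∑ j ∈ Finset.range (n + 1), (((j : ℕ) : ℝ) + β) * (c α (n - j) * c β j) := by
      rw [Finset.sum_range_succ']
      simp only [Nat.cast_zero, zero_mul, add_zero]
      apply Finset.sum_congr rfl
      intro j hj
      have h1 : n + 1 - (j + 1) = n - j := by omega
      rw [h1]
      push_cast
      rw [mul_comm (c α (n - j)), ← mul_assoc, c_succ hβ, mul_assoc, mul_comm (c β j)]
    calc ((n : ℝ) + 1) * ∑ j ∈ Finset.range (n + 2), c α (n + 1 - j) * c β j
        = ∑ j ∈ Finset.range (n + 2), (((n + 1 - j : ℕ) : ℝ) * (c α (n + 1 - j) * c β j)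
            + ((j : ℕ) : ℝ) * (c α (n + 1 - j) * c β j)) := by
          rw [Finset.mul_sum]
          apply Finset.sum_congr rfl
          intro j hj
          have hj' : j ≤ n + 1 := by simpa [Nat.lt_succ_iff] using hj
          have h1 : ((n + 1 - j : ℕ) : ℝ) = (n : ℝ) + 1 - (j : ℝ) := by
            push_cast [Nat.cast_sub hj']; ring
          rw [h1]; ring
      _ = ∑ j ∈ Finset.range (n + 1), (((n - j : ℕ) : ℝ) + α) * (c α (n - j) * c β j)
            + ∑ j ∈ Finset.range (n + 1), (((j : ℕ) : ℝ) + β) * (c α (n - j) * c β j) := by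
          rw [Finset.sum_add_distrib, sum1, sum2]
      _ = ((n : ℝ) + (α + β)) * ∑ j ∈ Finset.range (n + 1), c α (n - j) * c β j := by
          rw [Finset.mul_sum, ← Finset.sum_add_distrib]
          apply Finset.sum_congr rfl
          intro j hj
          have hj' : j ≤ n := by simpa [Nat.lt_succ_iff] using hj
          have h1 : ((n - j : ℕ) : ℝ) = (n : ℝ) - (j : ℝ) := by
            push_cast [Nat.cast_sub hj']; ring
          rw [h1]; ring
      _ = ((n : ℝ) + 1) * c (α + β) (n + 1) := by
          rw [ih, ← c_succ (by linarith : (0:ℝ) < α + β)]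

lemma H_eq_c (γ : ℝ) {k a : ℤ} {n : ℕ} (h : k - a = n + 1) : H γ k a = c (γ + 1) n := by
  have h1 : (1 : ℤ) ≤ k - a := by omega
  have h2 : (k : ℝ) - (a : ℝ) = (n : ℝ) + 1 := by
    have := congrArg (fun z : ℤ => (z : ℝ)) h
    push_cast at this
    linarith
  rw [H, if_pos h1, h2, c]
  rw [show (n : ℝ) + 1 + γ = (n : ℝ) + (γ + 1) by ring,
    Real.Gamma_nat_eq_factorial]

/-- The nabla fractional sum of order `α` based at `a` of the Taylor monomial
`H_{β-1}(·,a)` equals `H_{α+β-1}(k,a)`. -/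
theorem nabla_fractional_sum_taylor_monomial (α β : ℝ) (hα : 0 < α) (hβ : 0 < β)
    (a k : ℤ) (hk : a ≤ k) :
    ∑ s ∈ Finset.Icc (a + 1) k, H (α - 1) k (s - 1) * H (β - 1) s a
      = H (α + β - 1) k a := by
  rcases eq_or_lt_of_le hk with rfl | hlt
  · rw [H, if_neg (by omega)]
    rw [Finset.Icc_eq_empty (by omega), Finset.sum_empty]
  · set n : ℕ := (k - a - 1).toNat with hn
    have hkan : k - a = (n : ℤ) + 1 := by omega
    rw [H_eq_c (α + β - 1) hkan, show α + β - 1 + 1 = α + β by ring,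
      ← key_conv α β hα hβ n]
    apply Finset.sum_nbij' (fun s : ℤ => (s - a - 1).toNat) (fun j : ℕ => a + 1 + j)
    · intro s hs
      simp only [Finset.mem_Icc] at hs
      simp only [Finset.mem_range]
      omega
    · intro j hj
      simp only [Finset.mem_range] at hj
      simp only [Finset.mem_Icc]
      omega
    · intro s hs; simp only [Finset.mem_Icc] at hs; omega
    · intro j hj; simp only [Finset.mem_range] at hj; omega
    · intro s hs
      simp only [Finset.mem_Icc] at hs
      set j : ℕ := (s - a - 1).toNat with hj
      have h1 : k - (s - 1) = ((n - j : ℕ) : ℤ) + 1 := by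
        push_cast [Nat.cast_sub (by omega : j ≤ n)]
        omega
      have h2 : s - a = (j : ℤ) + 1 := by omega
      rw [H_eq_c (α - 1) h1, H_eq_c (β - 1) h2,
        show α - 1 + 1 = α by ring, show β - 1 + 1 = β by ring]
end

section
/- Let α ∈ (0,1) and β ∈ ℝ with β > α, and let a, k be integers with k ≥ a + 1. Then the nabla Riemann–Liouville fractional difference of order α based at a of the Taylor monomial H_{β−1}(·,a) equals H_{β−α−1}(k,a); explicitly, Σ_{s=a+1}^{k} H_{−α−1}(k, s−1)·H_{β−1}(s, a) = H_{β−α−1}(k, a). -/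
open Finset

/-- generalized binomial coefficient -/
noncomputable def bb (x : ℝ) (n : ℕ) : ℝ := (∏ i ∈ Finset.range n, (x - i)) / n.factorial

lemma bb_zero (x : ℝ) : bb x 0 = 1 := by simp [bb]

lemma prod_shift (x : ℝ) (n : ℕ) :
    ∏ i ∈ range (n+1), (x - i) = x * ∏ i ∈ range n, (x - 1 - i) := by
  rw [Finset.prod_range_succ']
  simp only [Nat.cast_zero, sub_zero, Nat.cast_add, Nat.cast_one]
  rw [mul_comm]
  congr 1
  exact Finset.prod_congr rfl fun i _ => by ring

lemma bb_absorb (x : ℝ) (n : ℕ) : ((n:ℝ)+1) * bb x (n+1) = x * bb (x-1) n := by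
  have hfac : ((n+1).factorial : ℝ) = ((n:ℝ)+1) * n.factorial := by
    push_cast [Nat.factorial_succ]; ring
  have h0 : (n.factorial : ℝ) ≠ 0 := by positivity
  rw [bb, bb, prod_shift, hfac]
  field_simp

lemma bb_vandermonde (N : ℕ) : ∀ (x y : ℝ),
    ∑ m ∈ range (N+1), bb x m * bb y (N - m) = bb (x+y) N := by
  induction N with
  | zero => intro x y; simp [bb_zero]
  | succ N ih =>
    intro x y
    set S := ∑ m ∈ range (N+2), bb x m * bb y (N+1-m) with hS
    have key : ((N:ℝ)+1) * S = ((N:ℝ)+1) * bb (x+y) (N+1) := by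
      have split : ((N:ℝ)+1) * S
          = (∑ m ∈ range (N+2), (m:ℝ) * (bb x m * bb y (N+1-m)))
            + ∑ m ∈ range (N+2), ((N+1-m : ℕ):ℝ) * (bb x m * bb y (N+1-m)) := by
        rw [hS, Finset.mul_sum, ← Finset.sum_add_distrib]
        refine Finset.sum_congr rfl fun m hm => ?_
        have hm' : m ≤ N + 1 := by
          have := Finset.mem_range.mp hm; omega
        have : ((N+1-m : ℕ):ℝ) = (N:ℝ) + 1 - m := by
          push_cast [Nat.cast_sub hm']; ring
        rw [this]; ring
      have sum1 : (∑ m ∈ range (N+2), (m:ℝ) * (bb x m * bb y (N+1-m)))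
          = x * bb (x-1+y) N := by
        rw [Finset.sum_range_succ']
        have step : ∀ l ∈ range (N+1),
            ((l+1 : ℕ):ℝ) * (bb x (l+1) * bb y (N+1-(l+1))) = x * (bb (x-1) l * bb y (N-l)) := by
          intro l hl
          have e1 : N + 1 - (l+1) = N - l := by omega
          have e2 : ((l+1:ℕ):ℝ) = (l:ℝ) + 1 := by push_cast; ring
          rw [e1, e2, show ((l:ℝ)+1) * (bb x (l+1) * bb y (N-l))
            = (((l:ℝ)+1) * bb x (l+1)) * bb y (N-l) from by ring, bb_absorb]
          ring
        rw [Finset.sum_congr rfl step, ← Finset.mul_sum, ih (x-1) y]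
        simp
      have sum2 : (∑ m ∈ range (N+2), ((N+1-m : ℕ):ℝ) * (bb x m * bb y (N+1-m)))
          = y * bb (x+(y-1)) N := by
        rw [Finset.sum_range_succ]
        have step : ∀ m ∈ range (N+1),
            ((N+1-m : ℕ):ℝ) * (bb x m * bb y (N+1-m)) = y * (bb x m * bb (y-1) (N-m)) := by
          intro m hm
          have hm' : m ≤ N := by have := Finset.mem_range.mp hm; omega
          have h1 : N + 1 - m = (N - m) + 1 := by omega
          have h2 : ((N+1-m : ℕ):ℝ) = ((N-m : ℕ):ℝ) + 1 := by rw [h1]; push_cast; ring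
          rw [h1]
          have h2' : ((N-m+1 : ℕ):ℝ) = ((N-m:ℕ):ℝ) + 1 := by push_cast; ring
          rw [h2']
          calc (((N-m:ℕ):ℝ) + 1) * (bb x m * bb y ((N-m)+1))
              = bb x m * ((((N-m:ℕ):ℝ)+1) * bb y ((N-m)+1)) := by ring
            _ = bb x m * (y * bb (y-1) (N-m)) := by rw [bb_absorb]
            _ = y * (bb x m * bb (y-1) (N-m)) := by ring
        rw [Finset.sum_congr rfl step, ← Finset.mul_sum, ih x (y-1)]
        simp
      have absorb : ((N:ℝ)+1) * bb (x+y) (N+1) = (x+y) * bb (x+y-1) N := bb_absorb (x+y) N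
      rw [split, sum1, sum2, absorb]
      have e1 : x - 1 + y = x + y - 1 := by ring
      have e2 : x + (y - 1) = x + y - 1 := by ring
      rw [e1, e2]; ring
    have hne : ((N:ℝ)+1) ≠ 0 := by positivity
    exact mul_left_cancel₀ hne key

lemma bb_reflect (x : ℝ) (m : ℕ) : bb ((m:ℝ) + x) m = (-1)^m * bb (-x-1) m := by
  rw [bb, bb]
  have h1 : ∏ i ∈ range m, ((m:ℝ) + x - i) = ∏ i ∈ range m, (x + 1 + i) := by
    rw [← Finset.prod_range_reflect (fun i => x + 1 + (i:ℝ)) m]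
    refine Finset.prod_congr rfl fun i hi => ?_
    have him : i < m := Finset.mem_range.mp hi
    have : ((m - 1 - i : ℕ):ℝ) = (m:ℝ) - 1 - i := by
      push_cast [Nat.cast_sub (by omega : i ≤ m - 1), Nat.cast_sub (by omega : 1 ≤ m)]
      ring
    rw [this]; ring
  have h2 : ∏ i ∈ range m, (-x - 1 - (i:ℝ)) = (-1)^m * ∏ i ∈ range m, (x + 1 + i) := by
    have : ∀ i ∈ range m, (-x - 1 - (i:ℝ)) = (-1) * (x + 1 + i) := fun i _ => by ring
    rw [Finset.prod_congr rfl this, Finset.prod_mul_distrib, Finset.prod_const,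
      Finset.card_range]
  have hsq : ((-1:ℝ)^m) * ((-1)^m) = 1 := by rw [← mul_pow]; norm_num
  rw [h1, h2, mul_div_assoc, ← mul_assoc, hsq, one_mul]

lemma gamma_prod (n : ℕ) (x : ℝ) (hx : ∀ i : ℕ, i < n → x + i ≠ 0) :
    Real.Gamma (x + n) = (∏ i ∈ range n, (x + i)) * Real.Gamma x := by
  induction n with
  | zero => simp
  | succ n ih =>
    have h1 : x + ((n:ℕ)+1 : ℕ) = (x + n) + 1 := by push_cast; ring
    rw [h1, Real.Gamma_add_one (hx n (by omega)), ih (fun i hi => hx i (by omega)),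
      Finset.prod_range_succ]
    ring

/-- Express H in terms of bb. -/
lemma H_eq_bb (γ : ℝ) (k a : ℤ) (h1 : a + 1 ≤ k)
    (hγ : ∀ i : ℕ, (γ + 1) + i ≠ 0) (hΓ : Real.Gamma (γ+1) ≠ 0) :
    H γ k a = bb ((k:ℝ) - a - 1 + γ) ((k-a).toNat - 1) := by
  set n : ℕ := (k-a).toNat with hn
  have hn1 : 1 ≤ n := by omega
  have hcast : (k:ℝ) - a = n := by
    have h : ((k - a : ℤ) : ℝ) = ((n : ℤ) : ℝ) := by congr 1; omega
    push_cast at h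
    linarith
  have hif : (1:ℤ) ≤ k - a := by omega
  rw [H, if_pos hif, hcast]
  have hgn : Real.Gamma (n:ℝ) = ((n-1).factorial : ℝ) := by
    have : (n:ℝ) = ((n-1 : ℕ):ℝ) + 1 := by
      push_cast [Nat.cast_sub hn1]; ring
    rw [this, Real.Gamma_nat_eq_factorial]
  have hprod : Real.Gamma ((n:ℝ) + γ) = (∏ i ∈ range (n-1), ((γ+1) + i)) * Real.Gamma (γ+1) := by
    have harg : (γ + 1) + ((n-1 : ℕ):ℝ) = (n:ℝ) + γ := by
      push_cast [Nat.cast_sub hn1]; ring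
    rw [← harg]
    exact gamma_prod (n-1) (γ+1) (fun i _ => hγ i)
  have hbb : bb ((n:ℝ) - 1 + γ) (n-1)
      = (∏ i ∈ range (n-1), ((γ+1) + i)) / ((n-1).factorial : ℝ) := by
    rw [bb]
    congr 1
    calc ∏ i ∈ range (n-1), ((n:ℝ) - 1 + γ - i)
        = ∏ i ∈ range (n-1), (γ + 1 + i) := by
          rw [← Finset.prod_range_reflect (fun i => γ + 1 + (i:ℝ)) (n-1)]
          refine Finset.prod_congr rfl fun i hi => ?_
          have him : i < n - 1 := Finset.mem_range.mp hi
          have : ((n - 1 - 1 - i : ℕ):ℝ) = (n:ℝ) - 1 - 1 - i := by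
            push_cast [Nat.cast_sub (by omega : i ≤ n - 1 - 1),
              Nat.cast_sub (by omega : 1 ≤ n - 1), Nat.cast_sub hn1]
            ring
          rw [this]; ring
      _ = ∏ i ∈ range (n-1), ((γ+1) + i) := Finset.prod_congr rfl fun i _ => by ring
  rw [hprod, hgn, hbb]
  have hf : ((n-1).factorial : ℝ) ≠ 0 := by positivity
  field_simp

/-- The nabla Riemann–Liouville fractional difference of order `α` based at `a`
of the Taylor monomial `H_{β-1}(·,a)` equals `H_{β-α-1}(k,a)`. -/
theorem nabla_RL_difference_taylor_monomial (α β : ℝ) (hα0 : 0 < α) (hα1 : α < 1)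
    (hβ : α < β) (a k : ℤ) (hk : a + 1 ≤ k) :
    ∑ s ∈ Finset.Icc (a + 1) k, H (-α - 1) k (s - 1) * H (β - 1) s a
      = H (β - α - 1) k a := by

  have hβ0 : 0 < β := lt_trans hα0 hβ
  set n : ℕ := (k-a).toNat with hn
  have hn1 : 1 ≤ n := by omega
  set N : ℕ := n - 1 with hN
  have hcast : (k:ℝ) - a = n := by
    have h : ((k - a : ℤ) : ℝ) = ((n : ℤ) : ℝ) := by congr 1; omega
    push_cast at h; linarith
  -- Gamma nonvanishing facts
  have hΓnegα : Real.Gamma (-α) ≠ 0 := by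
    refine Real.Gamma_ne_zero fun m => ?_
    cases m with
    | zero => simp; linarith
    | succ m =>
      push_cast
      intro hcon
      have hm0 : (0:ℝ) ≤ (m:ℝ) := Nat.cast_nonneg m
      linarith
  have hγα : ∀ i : ℕ, (-α - 1 + 1) + (i:ℝ) ≠ 0 := by
    intro i
    cases i with
    | zero => simp; intro hc; linarith
    | succ i =>
      push_cast
      intro hc
      have : (i:ℝ) ≥ 0 := by positivity
      linarith
  have hγβ : ∀ i : ℕ, (β - 1 + 1) + (i:ℝ) ≠ 0 := by
    intro i
    have : (i:ℝ) ≥ 0 := by positivity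
    intro hc; nlinarith
  have hγβα : ∀ i : ℕ, (β - α - 1 + 1) + (i:ℝ) ≠ 0 := by
    intro i
    have : (i:ℝ) ≥ 0 := by positivity
    intro hc; nlinarith
  have hΓβ : Real.Gamma (β - 1 + 1) ≠ 0 := by
    have : β - 1 + 1 = β := by ring
    rw [this]; exact ne_of_gt (Real.Gamma_pos_of_pos hβ0)
  have hΓβα : Real.Gamma (β - α - 1 + 1) ≠ 0 := by
    have : β - α - 1 + 1 = β - α := by ring
    rw [this]; exact ne_of_gt (Real.Gamma_pos_of_pos (by linarith))
  have hΓα' : Real.Gamma (-α - 1 + 1) ≠ 0 := by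
    have : -α - 1 + 1 = -α := by ring
    rw [this]; exact hΓnegα
  -- Reindex the sum
  have hmain : ∑ s ∈ Finset.Icc (a + 1) k, H (-α - 1) k (s - 1) * H (β - 1) s a
      = ∑ m ∈ Finset.range (N+1),
          ((-1:ℝ)^m * bb α m) * ((-1)^(N-m) * bb (-β) (N-m)) := by
    refine Finset.sum_nbij' (fun s => (k - s).toNat) (fun m => k - (m:ℤ)) ?_ ?_ ?_ ?_ ?_
    · intro s hs
      rw [Finset.mem_Icc] at hs
      simp only [Finset.mem_range, hN]
      omega
    · intro m hm
      simp only [Finset.mem_range, hN] at hm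
      simp only [Finset.mem_Icc]
      omega
    · intro s hs
      rw [Finset.mem_Icc] at hs
      omega
    · intro m hm
      simp only [Finset.mem_range, hN] at hm
      omega
    · intro s hs
      rw [Finset.mem_Icc] at hs
      set m : ℕ := (k - s).toNat with hm
      have hmN : m ≤ N := by omega
      have hms : (m:ℤ) = k - s := by omega
      -- first factor
      have hf1 : H (-α - 1) k (s - 1) = (-1:ℝ)^m * bb α m := by
        have e := H_eq_bb (-α-1) k (s-1) (by omega) hγα hΓα'
        have e2 : (k - (s-1)).toNat - 1 = m := by omega
        have e3 : (k:ℝ) - ((s-1 : ℤ):ℝ) - 1 + (-α-1) = (m:ℝ) + (-α-1) := by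
          have : ((m:ℤ):ℝ) = (k:ℝ) - s := by exact_mod_cast congrArg (Int.cast : ℤ → ℝ) hms
          push_cast at this ⊢
          linarith
        rw [e, e2, e3, bb_reflect]
        norm_num
      -- second factor
      have hf2 : H (β - 1) s a = (-1:ℝ)^(N-m) * bb (-β) (N-m) := by
        have e := H_eq_bb (β-1) s a (by omega) hγβ hΓβ
        have e2 : (s - a).toNat - 1 = N - m := by omega
        have e3 : (s:ℝ) - a - 1 + (β-1) = ((N-m : ℕ):ℝ) + (β-1) := by
          have h1 : ((N - m : ℕ):ℤ) = s - a - 1 := by omega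
          have h2 : ((N-m:ℕ):ℝ) = (s:ℝ) - a - 1 := by exact_mod_cast congrArg (Int.cast : ℤ → ℝ) h1
          linarith
        rw [e, e2, e3, bb_reflect]
        norm_num
      rw [hf1, hf2]
  rw [hmain]
  have hsign : ∀ m ∈ Finset.range (N+1),
      ((-1:ℝ)^m * bb α m) * ((-1)^(N-m) * bb (-β) (N-m))
        = (-1:ℝ)^N * (bb α m * bb (-β) (N-m)) := by
    intro m hm
    have hmN : m ≤ N := by have := Finset.mem_range.mp hm; omega
    have : (-1:ℝ)^m * (-1)^(N-m) = (-1)^N := by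
      rw [← pow_add]
      congr 1
      omega
    calc ((-1:ℝ)^m * bb α m) * ((-1)^(N-m) * bb (-β) (N-m))
        = ((-1:ℝ)^m * (-1)^(N-m)) * (bb α m * bb (-β) (N-m)) := by ring
      _ = (-1:ℝ)^N * (bb α m * bb (-β) (N-m)) := by rw [this]
  rw [Finset.sum_congr rfl hsign, ← Finset.mul_sum, bb_vandermonde N α (-β)]
  -- right-hand side
  have hR := H_eq_bb (β-α-1) k a hk hγβα hΓβα
  have e3 : (k:ℝ) - a - 1 + (β-α-1) = ((N:ℕ):ℝ) + (β-α-1) := by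
    have : ((N:ℕ):ℝ) = (n:ℝ) - 1 := by
      push_cast [hN, Nat.cast_sub hn1]; ring
    rw [this, hcast]
    try ring
  rw [hR]
  rw [show (k-a).toNat - 1 = N from rfl]
  rw [e3]
  rw [bb_reflect]
  rw [show -(β-α-1)-1 = α + -β from by ring]
end

section
/- Let α ∈ (0,1), let r ≥ 2 be an integer, and let M, N be n×n real matrices. Let D = D_{α,α,r}^{M,N} be the discrete delayed perturbation of the Mittag-Leffler function with β = α (assuming the required absolute convergence). Then D satisfies the homogeneous nabla Riemann–Liouville fractional delayed difference system: for every integer k ≥ 1, ∇_{−r}^{α} D(k) = M·D(k) + N·D(k−r), i.e., Σ_{s=1−r}^{k} H_{−α−1}(k, s−1)·D(s) = M·D(k) + N·D(k−r); moreover, for every integer k with 1−r ≤ k ≤ 0, D(k) = Σ_{i=0}^{∞} M^{i}·H_{iα+α−1}(k, −r), the nabla Mittag-Leffler matrix function E_{M,α,α−1}(k,−r). -/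
/-- The double sequence of matrices `Q(i,j)` generated by `M` and `N`:
`Q(0,0) = I`, `Q(0,j) = 0` for `j ≥ 1`, and
`Q(i+1,j) = M·Q(i,j) + N·Q(i,j-1)` (with `Q(i,-1) = 0`). -/
def Q {n : ℕ} (M N : Matrix (Fin n) (Fin n) ℝ) : ℕ → ℕ → Matrix (Fin n) (Fin n) ℝ
  | 0, 0 => 1
  | 0, _ + 1 => 0
  | i + 1, 0 => M * Q M N i 0
  | i + 1, j + 1 => M * Q M N i (j + 1) + N * Q M N i j

/-- The discrete delayed perturbation `D_{α,β,r}^{M,N}` of the Mittag-Leffler function: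
`D(k) = 0` for `k ≤ -r-1`, `D(-r) = I`, and for `k ≥ 1-r`,
`D(k) = Σ_{i=0}^{∞} Σ_{j} Q(i,j)·H_{iα+β-1}(k,(j-1)r)`; only the finitely many `j` with
`(j-1)r < k` contribute, and all such `j` lie in `Finset.range (k+r).toNat` (for `r ≥ 1`),
since `H_{iα+β-1}(k,(j-1)r) = 0` when `(j-1)r ≥ k`. -/
noncomputable def D {n : ℕ} (α β : ℝ) (r : ℤ) (M N : Matrix (Fin n) (Fin n) ℝ) (k : ℤ) :
    Matrix (Fin n) (Fin n) ℝ :=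
  if k ≤ -r - 1 then 0
  else if k = -r then 1
  else ∑' i : ℕ, ∑ j ∈ Finset.range (k + r).toNat,
    H ((i : ℝ) * α + β - 1) k (((j : ℤ) - 1) * r) • Q M N i j

/- ### Auxiliary lemmas -/

/-- Ascending factorial (Pochhammer) `x(x+1)⋯(x+n-1)`. -/
noncomputable def asc (x : ℝ) : ℕ → ℝ
  | 0 => 1
  | n + 1 => asc x n * (x + n)

lemma asc_succ (x : ℝ) (n : ℕ) : asc x (n+1) = asc x n * (x + n) := rfl

lemma asc_zero_eq_zero {n : ℕ} (hn : 1 ≤ n) : asc 0 n = 0 := by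
  induction n with
  | zero => omega
  | succ m ih =>
    match m, ih with
    | 0, _ => simp [asc]
    | m + 1, ih => rw [asc_succ, ih (by omega), zero_mul]

lemma asc_vandermonde (x y : ℝ) (n : ℕ) :
    ∑ s ∈ Finset.range (n+1), (n.choose s : ℝ) * (asc x s * asc y (n - s)) = asc (x + y) n := by
  induction n generalizing x y with
  | zero => simp [asc]
  | succ n ih =>
    have T1 : ∑ s ∈ Finset.range (n+1), (n.choose s : ℝ) * (asc x s * asc y (n+1-s))
        = ∑ s ∈ Finset.range (n+1),
            (n.choose s : ℝ) * (asc x s * asc y (n-s)) * (y + ((n : ℝ) - (s : ℝ))) := by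
      apply Finset.sum_congr rfl
      intro s hs
      rw [Finset.mem_range] at hs
      have h1 : n + 1 - s = (n - s) + 1 := by omega
      have h2 : ((n - s : ℕ) : ℝ) = (n : ℝ) - (s : ℝ) := by rw [Nat.cast_sub (by omega)]
      rw [h1, asc_succ, h2]
      ring
    have hG : ∑ s ∈ Finset.range (n+1), (n.choose s : ℝ) * (asc x s * asc y (n+1-s))
        = ∑ s ∈ Finset.range (n+1), (n.choose (s+1) : ℝ) * (asc x (s+1) * asc y (n-s))
          + asc y (n+1) := by
      have htop : ∑ s ∈ Finset.range (n+1), (n.choose s : ℝ) * (asc x s * asc y (n+1-s))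
          = ∑ s ∈ Finset.range (n+2), (n.choose s : ℝ) * (asc x s * asc y (n+1-s)) := by
        rw [Finset.sum_range_succ (fun s => (n.choose s : ℝ) * (asc x s * asc y (n+1-s))) (n+1)]
        simp [Nat.choose_succ_self]
      rw [htop, Finset.sum_range_succ'
        (fun s => (n.choose s : ℝ) * (asc x s * asc y (n+1-s))) (n+1)]
      simp only [Nat.add_sub_add_right]
      norm_num [asc]
    have split : ∑ s ∈ Finset.range (n+2), ((n+1).choose s : ℝ) * (asc x s * asc y (n+1-s))
        = ∑ s ∈ Finset.range (n+1), (n.choose s : ℝ) * (asc x s * asc y (n+1-s))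
          + ∑ s ∈ Finset.range (n+1), (n.choose s : ℝ) * (asc x (s+1) * asc y (n-s)) := by
      rw [Finset.sum_range_succ'
        (fun s => ((n+1).choose s : ℝ) * (asc x s * asc y (n+1-s))) (n+1)]
      simp only [Nat.add_sub_add_right]
      rw [hG]
      have h0 : ((n+1).choose 0 : ℝ) * (asc x 0 * asc y (n+1-0)) = asc y (n+1) := by
        norm_num [asc]
      rw [h0]
      rw [add_right_comm, add_left_inj]
      rw [← Finset.sum_add_distrib]
      apply Finset.sum_congr rfl
      intro s hs
      have hc : ((n+1).choose (s+1) : ℝ) = (n.choose s : ℝ) + (n.choose (s+1) : ℝ) := by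
        rw [Nat.choose_succ_succ]; push_cast; ring
      rw [hc]
      ring
    rw [split, T1, ← Finset.sum_add_distrib]
    have heq : ∑ s ∈ Finset.range (n+1),
        ((n.choose s : ℝ) * (asc x s * asc y (n-s)) * (y + ((n:ℝ) - (s:ℝ)))
          + (n.choose s : ℝ) * (asc x (s+1) * asc y (n-s)))
        = ∑ s ∈ Finset.range (n+1),
            (n.choose s : ℝ) * (asc x s * asc y (n-s)) * (x + y + n) := by
      apply Finset.sum_congr rfl
      intro s hs
      rw [asc_succ]
      ring
    rw [heq, ← Finset.sum_mul, ih, asc_succ]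

lemma H_of_nonpos {γ : ℝ} {k a : ℤ} (h : k ≤ a) : H γ k a = 0 := by
  rw [H, if_neg (by omega)]

lemma H_neg_one (k a : ℤ) : H (-1) k a = 0 := by
  rw [H]
  split
  · norm_num [Real.Gamma_zero]
  · rfl

lemma H_shift (γ : ℝ) (k a r : ℤ) : H γ (k - r) a = H γ k (a + r) := by
  unfold H
  split_ifs with c1 c2
  · push_cast
    ring_nf
  · omega
  · omega
  · rfl

lemma Gamma_add_nat (x : ℝ) (m : ℕ) (hx : ∀ j : ℕ, j < m → x + j ≠ 0) :
    Real.Gamma (x + m) = asc x m * Real.Gamma x := by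
  induction m with
  | zero => simp [asc]
  | succ m ih =>
    have h1 : x + (m+1 : ℕ) = (x + m) + 1 := by push_cast; ring
    rw [h1, Real.Gamma_add_one (hx m (by omega)), ih (fun j hj => hx j (by omega)), asc_succ]
    ring

lemma H_eq_asc {γ : ℝ} (hγ : ∀ m : ℕ, γ + 1 + m ≠ 0) {k a : ℤ} (h : 1 ≤ k - a) :
    H γ k a = asc (γ + 1) (k - a - 1).toNat / (Nat.factorial (k - a - 1).toNat) := by
  set m : ℕ := (k - a - 1).toNat with hm
  have hkam : (k : ℝ) - (a : ℝ) = (m : ℝ) + 1 := by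
    have h2 : (k - a : ℤ) = (m : ℤ) + 1 := by omega
    exact_mod_cast congrArg (Int.cast : ℤ → ℝ) h2
  have hΓ1 : Real.Gamma ((k:ℝ) - (a:ℝ)) = Nat.factorial m := by
    rw [hkam, Real.Gamma_nat_eq_factorial]
  have hΓ2 : Real.Gamma ((k:ℝ) - (a:ℝ) + γ) = asc (γ + 1) m * Real.Gamma (γ + 1) := by
    have : (k:ℝ) - (a:ℝ) + γ = (γ + 1) + m := by rw [hkam]; ring
    rw [this, Gamma_add_nat _ _ (fun j _ => hγ j)]
  have hne : Real.Gamma (γ + 1) ≠ 0 := by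
    apply Real.Gamma_ne_zero
    intro mm
    have := hγ mm
    intro hc
    apply this
    rw [hc]; ring
  rw [H, if_pos h, hΓ1, hΓ2]
  rw [mul_comm (asc (γ + 1) m) (Real.Gamma (γ + 1)),
    mul_comm ((m.factorial : ℝ)) (Real.Gamma (γ + 1))] at *
  rw [mul_div_mul_left _ _ hne]

lemma asc_vandermonde_div (x y : ℝ) (n : ℕ) :
    ∑ s ∈ Finset.range (n+1), (asc x s / (Nat.factorial s)) * (asc y (n-s) / (Nat.factorial (n-s)))
      = asc (x + y) n / (Nat.factorial n) := by
  have base := asc_vandermonde x y n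
  have step : ∑ s ∈ Finset.range (n+1),
      (asc x s / (Nat.factorial s)) * (asc y (n-s) / (Nat.factorial (n-s)))
      = ∑ s ∈ Finset.range (n+1), (n.choose s : ℝ) * (asc x s * asc y (n-s)) / (Nat.factorial n) := by
    apply Finset.sum_congr rfl
    intro s hs
    rw [Finset.mem_range] at hs
    rw [Nat.cast_choose ℝ (by omega : s ≤ n)]
    have h1 : (Nat.factorial s : ℝ) ≠ 0 := by positivity
    have h2 : (Nat.factorial (n-s) : ℝ) ≠ 0 := by positivity
    have h3 : (Nat.factorial n : ℝ) ≠ 0 := by positivity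
    field_simp
  rw [step, ← Finset.sum_div, base]

lemma conv_core (α μ : ℝ) (hα : ∀ m : ℕ, -α + (m : ℝ) ≠ 0) (hμ : ∀ m : ℕ, μ + 1 + (m : ℝ) ≠ 0)
    (b k : ℤ) (hbk : b + 1 ≤ k) :
    ∑ s ∈ Finset.Icc (b+1) k, H (-α-1) k (s-1) * H μ s b
      = asc (μ + 1 - α) (k-b-1).toNat / (Nat.factorial (k-b-1).toNat) := by
  set m : ℕ := (k - b - 1).toNat with hm
  have reindex : ∑ s ∈ Finset.Icc (b+1) k, H (-α-1) k (s-1) * H μ s b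
      = ∑ t ∈ Finset.range (m+1), H (-α-1) k (b+t) * H μ (b+1+t) b := by
    apply Finset.sum_bij' (fun s _ => (s - b - 1).toNat) (fun t _ => b+1+(t:ℤ))
    · intro s hs
      rw [Finset.mem_Icc] at hs
      rw [Finset.mem_range]
      omega
    · intro t ht
      rw [Finset.mem_range] at ht
      rw [Finset.mem_Icc]
      omega
    · intro s hs
      rw [Finset.mem_Icc] at hs
      omega
    · intro t ht
      rw [Finset.mem_range] at ht
      omega
    · intro s hs
      rw [Finset.mem_Icc] at hs
      have h1 : b + ((s - b - 1).toNat : ℤ) = s - 1 := by omega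
      have h2 : b + 1 + ((s - b - 1).toNat : ℤ) = s := by omega
      rw [h1, h2]
  rw [reindex]
  have term : ∀ t ∈ Finset.range (m+1),
      H (-α-1) k (b+t) * H μ (b+1+t) b
        = (asc (μ+1) t / (Nat.factorial t)) * (asc (-α) (m-t) / (Nat.factorial (m-t))) := by
    intro t ht
    rw [Finset.mem_range] at ht
    have ht' : (t : ℤ) ≤ m := by omega
    have e1 : H (-α-1) k (b+t) = asc (-α) (m-t) / (Nat.factorial (m-t)) := by
      rw [H_eq_asc (by intro mm; have := hα mm; intro hc; apply this; rw [← hc]; ring)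
        (by omega : 1 ≤ k - (b+t))]
      have : (k - (b+(t:ℤ)) - 1).toNat = m - t := by omega
      rw [this]
      norm_num
    have e2 : H μ (b+1+t) b = asc (μ+1) t / (Nat.factorial t) := by
      rw [H_eq_asc hμ (by omega : 1 ≤ (b+1+(t:ℤ)) - b)]
      have : (b+1+(t:ℤ) - b - 1).toNat = t := by omega
      rw [this]
    rw [e1, e2, mul_comm]
  rw [Finset.sum_congr rfl term, asc_vandermonde_div, sub_eq_add_neg (μ+1) α]

lemma conv_eq_H {α : ℝ} (hα0 : 0 < α) (hα1 : α < 1) (i : ℕ) (b k : ℤ)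
    (hik : 1 ≤ i ∨ b + 2 ≤ k) :
    ∑ s ∈ Finset.Icc (b+1) k, H (-α-1) k (s-1) * H ((i:ℝ)*α + α - 1) s b
      = H ((i:ℝ)*α - 1) k b := by
  have hα' : ∀ m : ℕ, -α + (m : ℝ) ≠ 0 := by
    intro m
    rcases Nat.eq_zero_or_pos m with h | h
    · subst h; push_cast; linarith
    · have : (1:ℝ) ≤ (m:ℝ) := by exact_mod_cast h
      linarith
  rcases le_or_gt (k : ℤ) b with hkb | hkb
  · rw [Finset.Icc_eq_empty (by omega), Finset.sum_empty, H_of_nonpos hkb]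
  · have hbk : b + 1 ≤ k := hkb
    have hμ : ∀ m : ℕ, (i:ℝ)*α + α - 1 + 1 + (m : ℝ) ≠ 0 := by
      intro m
      have h1 : (0:ℝ) ≤ (i:ℝ) := Nat.cast_nonneg i
      have h2 : (0:ℝ) ≤ (m:ℝ) := Nat.cast_nonneg m
      nlinarith
    rw [conv_core α ((i:ℝ)*α + α - 1) hα' hμ b k hbk]
    rcases hik with hi | hk2
    · have h1 : (1:ℝ) ≤ (i:ℝ) := by exact_mod_cast hi
      rw [H_eq_asc (γ := (i:ℝ)*α - 1)
        (by intro m; have h2 : (0:ℝ) ≤ (m:ℝ) := Nat.cast_nonneg m; nlinarith)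
        (by omega : 1 ≤ k - b)]
      congr 2
      ring
    · rcases Nat.eq_zero_or_pos i with h | h
      · subst h
        have hm1 : 1 ≤ (k - b - 1).toNat := by omega
        have e : ((0:ℕ):ℝ)*α + α - 1 + 1 - α = 0 := by push_cast; ring
        rw [e, asc_zero_eq_zero hm1, zero_div]
        have h2 : ((0:ℕ):ℝ)*α - 1 = -1 := by push_cast; ring
        rw [h2, H_neg_one]
      · have h1 : (1:ℝ) ≤ (i:ℝ) := by exact_mod_cast h
        rw [H_eq_asc (γ := (i:ℝ)*α - 1)
          (by intro m; have h2 : (0:ℝ) ≤ (m:ℝ) := Nat.cast_nonneg m; nlinarith)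
          (by omega : 1 ≤ k - b)]
        congr 2
        ring

lemma Q_pow {n : ℕ} (M N : Matrix (Fin n) (Fin n) ℝ) (i : ℕ) : Q M N i 0 = M ^ i := by
  induction i with
  | zero => rw [pow_zero]; rfl
  | succ i ih => rw [pow_succ']; show M * Q M N i 0 = M * M ^ i; rw [ih]

/-- The discrete delayed perturbation `D = D_{α,α,r}^{M,N}` satisfies the homogeneous
nabla Riemann–Liouville fractional delayed difference system
`∇_{-r}^{α} D(k) = M·D(k) + N·D(k-r)` for `k ≥ 1`, and on the initial interval
`1-r ≤ k ≤ 0` it coincides with the nabla Mittag-Leffler matrix function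
`E_{M,α,α-1}(k,-r) = Σ_{i=0}^{∞} M^i·H_{iα+α-1}(k,-r)`. -/
theorem D_solves_homogeneous_system {n : ℕ} (α : ℝ) (hα0 : 0 < α) (hα1 : α < 1)
    (r : ℤ) (hr : 2 ≤ r) (M N : Matrix (Fin n) (Fin n) ℝ)
    (hconv : ∀ k : ℤ, 1 - r ≤ k → ∀ j : ℕ, ∀ x y : Fin n,
      Summable fun i : ℕ =>
        |(H ((i : ℝ) * α + α - 1) k (((j : ℤ) - 1) * r) • Q M N i j) x y|) :
    (∀ k : ℤ, 1 ≤ k →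
      ∑ s ∈ Finset.Icc (1 - r) k, H (-α - 1) k (s - 1) • D α α r M N s
        = M * D α α r M N k + N * D α α r M N (k - r)) ∧
      (∀ k : ℤ, 1 - r ≤ k → k ≤ 0 →
        D α α r M N k = ∑' i : ℕ, H ((i : ℝ) * α + α - 1) k (-r) • M ^ i) := by
  -- entrywise summability
  have hS : ∀ k : ℤ, 1 - r ≤ k → ∀ j : ℕ, ∀ x y : Fin n,
      Summable fun i : ℕ => H ((i : ℝ) * α + α - 1) k (((j : ℤ) - 1) * r) * Q M N i j x y := by
    intro k hk j x y
    have h := hconv k hk j x y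
    rw [summable_abs_iff] at h
    apply h.congr
    intro i
    rw [Matrix.smul_apply, smul_eq_mul]
  -- entrywise formula for D
  have hD : ∀ k : ℤ, 1 - r ≤ k → ∀ x y : Fin n,
      D α α r M N k x y
        = ∑' i : ℕ, ∑ j ∈ Finset.range (k + r).toNat,
            H ((i : ℝ) * α + α - 1) k (((j : ℤ) - 1) * r) * Q M N i j x y := by
    intro k hk x y
    rw [D, if_neg (by omega), if_neg (by omega)]
    have hsum : Summable fun i : ℕ => ∑ j ∈ Finset.range (k + r).toNat,
        H ((i : ℝ) * α + α - 1) k (((j : ℤ) - 1) * r) • Q M N i j := by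
      apply Pi.summable.mpr
      intro x'
      apply Pi.summable.mpr
      intro y'
      apply (summable_sum (fun j _ => hS k hk j x' y')).congr
      intro i
      rw [Matrix.sum_apply]
      apply Finset.sum_congr rfl
      intro j _
      rw [Matrix.smul_apply, smul_eq_mul]
    erw [tsum_apply hsum, tsum_apply ((Pi.summable).mp hsum x)]
    apply tsum_congr
    intro i
    rw [Matrix.sum_apply]
    apply Finset.sum_congr rfl
    intro j _
    rw [Matrix.smul_apply, smul_eq_mul]
  constructor
  · intro k hk
    have hk' : (1:ℤ) - r ≤ k := by omega
    have hk'' : (1:ℤ) - r ≤ k - r := by omega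
    -- extended entrywise formula with uniform range
    have hDx : ∀ s : ℤ, 1 - r ≤ s → s ≤ k → ∀ x y : Fin n,
        D α α r M N s x y
          = ∑' i : ℕ, ∑ j ∈ Finset.range (k + r).toNat,
              H ((i : ℝ) * α + α - 1) s (((j : ℤ) - 1) * r) * Q M N i j x y := by
      intro s hs1 hs2 x y
      rw [hD s hs1 x y]
      apply tsum_congr
      intro i
      apply Finset.sum_subset
      · intro j hj
        rw [Finset.mem_range] at *
        omega
      · intro j hj1 hj2
        rw [Finset.mem_range, not_lt] at hj2
        have hjs : s + r ≤ (j:ℤ) := by omega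
        have e1 : s + r - 1 ≤ (j:ℤ) - 1 := by omega
        have e2 : (s + r - 1) * r ≤ ((j:ℤ) - 1) * r :=
          mul_le_mul_of_nonneg_right e1 (by omega)
        have e3 : s ≤ (s + r - 1) * r := by
          nlinarith [mul_nonneg (show (0:ℤ) ≤ s + r - 1 by omega)
            (show (0:ℤ) ≤ r - 1 by omega)]
        rw [H_of_nonpos (e3.trans e2), zero_mul]
    ext x y
    have entryL : (∑ s ∈ Finset.Icc (1 - r) k, H (-α-1) k (s-1) • D α α r M N s) x y
        = ∑ s ∈ Finset.Icc (1 - r) k, H (-α-1) k (s-1) * D α α r M N s x y := by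
      rw [Matrix.sum_apply]
      apply Finset.sum_congr rfl
      intro s _
      rw [Matrix.smul_apply, smul_eq_mul]
    -- the per-i convolution computation
    have hgi : ∀ i : ℕ,
        (∑ s ∈ Finset.Icc (1 - r) k, H (-α-1) k (s-1)
            * ∑ j ∈ Finset.range (k + r).toNat,
                H ((i:ℝ)*α + α - 1) s (((j:ℤ)-1)*r) * Q M N i j x y)
          = ∑ j ∈ Finset.range (k + r).toNat,
              H ((i:ℝ)*α - 1) k (((j:ℤ)-1)*r) * Q M N i j x y := by
      intro i
      have swap : (∑ s ∈ Finset.Icc (1 - r) k, H (-α-1) k (s-1)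
            * ∑ j ∈ Finset.range (k + r).toNat,
                H ((i:ℝ)*α + α - 1) s (((j:ℤ)-1)*r) * Q M N i j x y)
          = ∑ j ∈ Finset.range (k + r).toNat,
              (∑ s ∈ Finset.Icc (1 - r) k,
                H (-α-1) k (s-1) * H ((i:ℝ)*α + α - 1) s (((j:ℤ)-1)*r))
                * Q M N i j x y := by
        simp_rw [Finset.mul_sum]
        rw [Finset.sum_comm]
        apply Finset.sum_congr rfl
        intro j _
        rw [Finset.sum_mul]
        apply Finset.sum_congr rfl
        intro s _
        ring
      rw [swap]
      apply Finset.sum_congr rfl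
      intro j hj
      have hbm : -r ≤ ((j:ℤ) - 1) * r := by
        have h1 : (-1 : ℤ) * r ≤ ((j:ℤ)-1) * r :=
          mul_le_mul_of_nonneg_right (by omega) (by omega)
        have h2 : (-1 : ℤ) * r = -r := by ring
        omega
      have shrink : (∑ s ∈ Finset.Icc (1 - r) k,
            H (-α-1) k (s-1) * H ((i:ℝ)*α + α - 1) s (((j:ℤ)-1)*r))
          = ∑ s ∈ Finset.Icc (((j:ℤ)-1)*r + 1) k,
              H (-α-1) k (s-1) * H ((i:ℝ)*α + α - 1) s (((j:ℤ)-1)*r) := by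
        symm
        apply Finset.sum_subset
        · intro s hs
          rw [Finset.mem_Icc] at *
          omega
        · intro s hs1 hs2
          rw [Finset.mem_Icc] at hs1
          rw [Finset.mem_Icc, not_and_or, not_le, not_le] at hs2
          have hsb : s ≤ ((j:ℤ)-1)*r := by
            rcases hs2 with h | h
            · omega
            · omega
          rw [H_of_nonpos hsb, mul_zero]
      rcases Nat.eq_zero_or_pos i with hi0 | hi1
      · subst hi0
        rcases Nat.eq_zero_or_pos j with hj0 | hj1
        · subst hj0
          rw [shrink, conv_eq_H hα0 hα1 0 _ k (Or.inr (by
            have : (((0:ℕ):ℤ) - 1) * r = -r := by push_cast; ring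
            omega))]
        · obtain ⟨j', rfl⟩ : ∃ j', j = j' + 1 := ⟨j - 1, by omega⟩
          have hq : Q M N 0 (j' + 1) x y = 0 := rfl
          rw [hq, mul_zero, mul_zero]
      · rw [shrink, conv_eq_H hα0 hα1 i _ k (Or.inl hi1)]
    -- summability of the convolved family
    have hFs : ∀ s ∈ Finset.Icc (1 - r) k, Summable fun i : ℕ =>
        H (-α-1) k (s-1) * ∑ j ∈ Finset.range (k + r).toNat,
          H ((i:ℝ)*α + α - 1) s (((j:ℤ)-1)*r) * Q M N i j x y := by
      intro s hs
      rw [Finset.mem_Icc] at hs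
      exact (summable_sum (fun j _ => hS s hs.1 j x y)).mul_left _
    have hgsum : Summable fun i : ℕ =>
        ∑ j ∈ Finset.range (k + r).toNat,
          H ((i:ℝ)*α - 1) k (((j:ℤ)-1)*r) * Q M N i j x y :=
      (summable_sum hFs).congr hgi
    have hL : ∑ s ∈ Finset.Icc (1 - r) k, H (-α-1) k (s-1) * D α α r M N s x y
        = ∑' i : ℕ, ∑ j ∈ Finset.range (k + r).toNat,
            H ((i:ℝ)*α - 1) k (((j:ℤ)-1)*r) * Q M N i j x y := by
      have step1 : ∀ s ∈ Finset.Icc (1 - r) k,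
          H (-α-1) k (s-1) * D α α r M N s x y
            = ∑' i : ℕ, H (-α-1) k (s-1)
                * ∑ j ∈ Finset.range (k + r).toNat,
                    H ((i:ℝ)*α + α - 1) s (((j:ℤ)-1)*r) * Q M N i j x y := by
        intro s hs
        rw [Finset.mem_Icc] at hs
        rw [hDx s hs.1 hs.2 x y, tsum_mul_left]
      rw [Finset.sum_congr rfl step1, ← Summable.tsum_finsetSum hFs]
      exact tsum_congr hgi
    -- entrywise formulas for the right-hand side
    have hR1 : (M * D α α r M N k) x y
        = ∑' i : ℕ, ∑ j ∈ Finset.range (k + r).toNat,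
            H ((i:ℝ)*α + α - 1) k (((j:ℤ)-1)*r) * (M * Q M N i j) x y := by
      rw [Matrix.mul_apply]
      have step : ∀ z : Fin n, z ∈ Finset.univ → M x z * D α α r M N k z y
          = ∑' i : ℕ, M x z * ∑ j ∈ Finset.range (k + r).toNat,
              H ((i:ℝ)*α + α - 1) k (((j:ℤ)-1)*r) * Q M N i j z y := by
        intro z _
        rw [hD k hk' z y, tsum_mul_left]
      rw [Finset.sum_congr rfl step,
        ← Summable.tsum_finsetSum (fun z _ => (summable_sum (fun j _ => hS k hk' j z y)).mul_left (M x z))]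
      apply tsum_congr
      intro i
      simp_rw [Finset.mul_sum]
      rw [Finset.sum_comm]
      apply Finset.sum_congr rfl
      intro j _
      rw [Matrix.mul_apply, Finset.mul_sum]
      apply Finset.sum_congr rfl
      intro z _
      ring
    have hR2 : (N * D α α r M N (k - r)) x y
        = ∑' i : ℕ, ∑ j ∈ Finset.range (k - r + r).toNat,
            H ((i:ℝ)*α + α - 1) (k - r) (((j:ℤ)-1)*r) * (N * Q M N i j) x y := by
      rw [Matrix.mul_apply]
      have step : ∀ z : Fin n, z ∈ Finset.univ → N x z * D α α r M N (k - r) z y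
          = ∑' i : ℕ, N x z * ∑ j ∈ Finset.range (k - r + r).toNat,
              H ((i:ℝ)*α + α - 1) (k - r) (((j:ℤ)-1)*r) * Q M N i j z y := by
        intro z _
        rw [hD (k - r) hk'' z y, tsum_mul_left]
      rw [Finset.sum_congr rfl step,
        ← Summable.tsum_finsetSum (fun z _ => (summable_sum (fun j _ => hS (k - r) hk'' j z y)).mul_left (N x z))]
      apply tsum_congr
      intro i
      simp_rw [Finset.mul_sum]
      rw [Finset.sum_comm]
      apply Finset.sum_congr rfl
      intro j _
      rw [Matrix.mul_apply, Finset.mul_sum]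
      apply Finset.sum_congr rfl
      intro z _
      ring
    -- summability of the two right-hand families
    have hp : Summable fun i : ℕ => ∑ j ∈ Finset.range (k + r).toNat,
        H ((i:ℝ)*α + α - 1) k (((j:ℤ)-1)*r) * (M * Q M N i j) x y := by
      apply Summable.congr (f := fun i : ℕ => ∑ j ∈ Finset.range (k + r).toNat, ∑ z : Fin n,
        M x z * (H ((i:ℝ)*α + α - 1) k (((j:ℤ)-1)*r) * Q M N i j z y))
      · exact summable_sum (fun j _ => summable_sum (fun z _ => (hS k hk' j z y).mul_left _))
      · intro i
        apply Finset.sum_congr rfl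
        intro j _
        rw [Matrix.mul_apply, Finset.mul_sum]
        apply Finset.sum_congr rfl
        intro z _
        ring
    have hq : Summable fun i : ℕ => ∑ j ∈ Finset.range (k - r + r).toNat,
        H ((i:ℝ)*α + α - 1) (k - r) (((j:ℤ)-1)*r) * (N * Q M N i j) x y := by
      apply Summable.congr (f := fun i : ℕ => ∑ j ∈ Finset.range (k - r + r).toNat, ∑ z : Fin n,
        N x z * (H ((i:ℝ)*α + α - 1) (k - r) (((j:ℤ)-1)*r) * Q M N i j z y))
      · exact summable_sum (fun j _ => summable_sum (fun z _ => (hS (k - r) hk'' j z y).mul_left _))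
      · intro i
        apply Finset.sum_congr rfl
        intro j _
        rw [Matrix.mul_apply, Finset.mul_sum]
        apply Finset.sum_congr rfl
        intro z _
        ring
    have hG0 : (∑ j ∈ Finset.range (k + r).toNat,
        H (((0:ℕ):ℝ)*α - 1) k (((j:ℤ)-1)*r) * Q M N 0 j x y) = 0 := by
      apply Finset.sum_eq_zero
      intro j _
      rw [show ((0:ℕ):ℝ)*α - 1 = -1 by push_cast; ring, H_neg_one, zero_mul]
    rw [entryL, hL, Matrix.add_apply, hR1, hR2, ← Summable.tsum_add hp hq,
      Summable.tsum_eq_zero_add hgsum, hG0, zero_add]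
    apply tsum_congr
    intro i
    -- transform q i
    have hq' : (∑ j ∈ Finset.range (k - r + r).toNat,
          H ((i:ℝ)*α + α - 1) (k - r) (((j:ℤ)-1)*r) * (N * Q M N i j) x y)
        = ∑ j ∈ Finset.range ((k + r).toNat - 1),
            H ((i:ℝ)*α + α - 1) k ((j:ℤ)*r) * (N * Q M N i j) x y := by
      have e1 : ∀ j ∈ Finset.range (k - r + r).toNat,
          H ((i:ℝ)*α + α - 1) (k - r) (((j:ℤ)-1)*r) * (N * Q M N i j) x y
            = H ((i:ℝ)*α + α - 1) k ((j:ℤ)*r) * (N * Q M N i j) x y := by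
        intro j _
        rw [H_shift]
        congr 2
        ring
      rw [Finset.sum_congr rfl e1]
      apply Finset.sum_subset
      · intro j hj
        rw [Finset.mem_range] at *
        omega
      · intro j hj1 hj2
        rw [Finset.mem_range, not_lt] at hj2
        have hjk : k ≤ (j:ℤ) := by omega
        have e2 : k * r ≤ (j:ℤ) * r := mul_le_mul_of_nonneg_right hjk (by omega)
        have e3 : k ≤ k * r := by
          nlinarith [mul_nonneg (show (0:ℤ) ≤ k by omega) (show (0:ℤ) ≤ r - 1 by omega)]
        rw [H_of_nonpos (e3.trans e2), zero_mul]
    rw [hq']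
    have ecast : ((i+1:ℕ):ℝ) * α - 1 = (i:ℝ)*α + α - 1 := by push_cast; ring
    rw [ecast]
    obtain ⟨K', hK'⟩ : ∃ K', (k + r).toNat = K' + 1 := ⟨(k + r).toNat - 1, by omega⟩
    rw [hK']
    simp only [Nat.add_sub_cancel]
    rw [Finset.sum_range_succ'
      (fun j => H ((i:ℝ)*α + α - 1) k (((j:ℤ)-1)*r) * Q M N (i+1) j x y) K',
      Finset.sum_range_succ'
      (fun j => H ((i:ℝ)*α + α - 1) k (((j:ℤ)-1)*r) * (M * Q M N i j) x y) K']
    have hterm : ∀ j ∈ Finset.range K',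
        H ((i:ℝ)*α + α - 1) k ((((j+1:ℕ):ℤ) - 1) * r) * Q M N (i+1) (j+1) x y
          = H ((i:ℝ)*α + α - 1) k ((((j+1:ℕ):ℤ) - 1) * r) * (M * Q M N i (j+1)) x y
            + H ((i:ℝ)*α + α - 1) k ((j:ℤ)*r) * (N * Q M N i j) x y := by
      intro j _
      have e2 : (((j+1:ℕ):ℤ) - 1) * r = (j:ℤ)*r := by push_cast; ring
      rw [e2, show Q M N (i+1) (j+1) = M * Q M N i (j+1) + N * Q M N i j from rfl,
        Matrix.add_apply]
      ring
    rw [Finset.sum_congr rfl hterm, Finset.sum_add_distrib,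
      show Q M N (i+1) 0 = M * Q M N i 0 from rfl]
    ring
  · -- initial values
    intro k hk1 hk0
    rw [D, if_neg (by omega), if_neg (by omega)]
    apply tsum_congr
    intro i
    have hK : 0 ∈ Finset.range (k + r).toNat := by
      rw [Finset.mem_range]
      omega
    rw [Finset.sum_eq_single_of_mem 0 hK]
    · have e : (((0:ℕ) : ℤ) - 1) * r = -r := by push_cast; ring
      rw [e, Q_pow]
    · intro j _ hj
      have hb : (0:ℤ) ≤ ((j:ℤ) - 1) * r := by
        apply mul_nonneg _ (by omega)
        omega
      rw [H_of_nonpos (by omega), zero_smul]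
end

section
/- Let α ∈ (0,1), let r ≥ 2 be an integer, let M, N be n×n real matrices, and let f be a function from the positive integers to ℝ^n. Let D = D_{α,α,r}^{M,N} be the discrete delayed perturbation of the Mittag-Leffler function with β = α (assuming the required absolute convergence). Define z(k) := Σ_{s=1}^{k} D(k−r−s+1)·f(s) for integers k ≥ 1 and z(k) := 0 for k ≤ 0. Then z solves the nonhomogeneous system with zero initial data: z(k) = 0 for every integer k with 1−r ≤ k ≤ 0, and ∇_{−r}^{α} z(k) = M·z(k) + N·z(k−r) + f(k) for every integer k ≥ 1. -/
open Matrix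

namespace DDP

/-! ### Ascending factorials and the Vandermonde convolution -/

def asc (x : ℝ) : ℕ → ℝ
  | 0 => 1
  | m + 1 => asc x m * (x + m)

lemma asc_succ (x : ℝ) (m : ℕ) : asc x (m + 1) = asc x m * (x + m) := rfl

theorem vandermonde (x y : ℝ) : ∀ nn : ℕ,
    ∑ m ∈ Finset.range (nn + 1), (nn.choose m : ℝ) * (asc x m * asc y (nn - m))
      = asc (x + y) nn := by
  intro nn
  induction nn with
  | zero => simp [asc]
  | succ n ih =>
    have key : ∀ m ∈ Finset.range (n + 1),
        (n.choose m : ℝ) * (asc x (m + 1) * asc y (n - m))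
          + (n.choose m : ℝ) * (asc x m * asc y (n + 1 - m))
          = (x + y + n) * ((n.choose m : ℝ) * (asc x m * asc y (n - m))) := by
      intro m hm
      rw [Finset.mem_range] at hm
      have hm' : m ≤ n := by omega
      have e1 : n + 1 - m = (n - m) + 1 := by omega
      have e2 : ((n - m : ℕ) : ℝ) = (n : ℝ) - m := by
        push_cast [hm']; ring
      rw [e1, asc_succ, asc_succ, e2]; ring
    have P2ext : ∑ m ∈ Finset.range (n + 2), (n.choose m : ℝ) * (asc x m * asc y (n + 1 - m))
        = ∑ m ∈ Finset.range (n + 1), (n.choose m : ℝ) * (asc x m * asc y (n + 1 - m)) := by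
      rw [Finset.sum_range_succ]
      simp [Nat.choose_succ_self]
    have decomp : ∑ m ∈ Finset.range (n + 1 + 1),
        ((n + 1).choose m : ℝ) * (asc x m * asc y (n + 1 - m))
        = ∑ m ∈ Finset.range (n + 1), (n.choose m : ℝ) * (asc x (m + 1) * asc y (n - m))
          + ∑ m ∈ Finset.range (n + 2), (n.choose m : ℝ) * (asc x m * asc y (n + 1 - m)) := by
      rw [Finset.sum_range_succ' _ (n + 1), Finset.sum_range_succ' _ (n + 1)]
      have : ∀ m ∈ Finset.range (n + 1),
          ((n + 1).choose (m + 1) : ℝ) * (asc x (m + 1) * asc y (n + 1 - (m + 1)))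
            = (n.choose m : ℝ) * (asc x (m + 1) * asc y (n - m))
              + (n.choose (m + 1) : ℝ) * (asc x (m + 1) * asc y (n + 1 - (m + 1))) := by
        intro m hm
        rw [Nat.choose_succ_succ]
        have e1 : n + 1 - (m + 1) = n - m := by omega
        push_cast [e1]; ring
      rw [Finset.sum_congr rfl this, Finset.sum_add_distrib]
      simp [asc]
      ring
    rw [decomp, P2ext, ← Finset.sum_add_distrib, Finset.sum_congr rfl key,
      ← Finset.mul_sum, ih, asc_succ]
    ring

lemma Gamma_asc (x : ℝ) (hx : Real.Gamma x ≠ 0) (m : ℕ) :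
    Real.Gamma (x + m) = Real.Gamma x * asc x m := by
  induction m with
  | zero => simp [asc]
  | succ m ih =>
    have hxm : x + m ≠ 0 := by
      intro h
      apply hx
      rw [Real.Gamma_eq_zero_iff]
      exact ⟨m, by linarith⟩
    have : x + (m + 1 : ℕ) = (x + m) + 1 := by push_cast; ring
    rw [this, Real.Gamma_add_one hxm, ih, asc_succ]; ring

lemma asc_zero_left (m : ℕ) : asc 0 m = if m = 0 then 1 else 0 := by
  induction m with
  | zero => simp [asc]
  | succ m ih =>
    rcases Nat.eq_zero_or_pos m with h | h
    · subst h; simp [asc]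
    · simp [asc_succ, ih, (by omega : m ≠ 0)]

/-! ### Basic lemmas about `H` -/

lemma H_of_nonpos (γ : ℝ) {k a : ℤ} (h : ¬ 1 ≤ k - a) : H γ k a = 0 := if_neg h

noncomputable def Hasc (γ : ℝ) (k a : ℤ) : ℝ :=
  if 1 ≤ k - a then asc (γ + 1) (k - a - 1).toNat / Nat.factorial (k - a - 1).toNat else 0

lemma H_eq_Hasc (γ : ℝ) (hγ : Real.Gamma (γ + 1) ≠ 0) (k a : ℤ) : H γ k a = Hasc γ k a := by
  unfold H Hasc
  by_cases h : 1 ≤ k - a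
  · rw [if_pos h, if_pos h]
    set p : ℕ := (k - a - 1).toNat with hp
    have hka : (k : ℝ) - a = (p : ℝ) + 1 := by
      have h2 : (k - a - 1 : ℤ) = (p : ℤ) := by omega
      have := congrArg (fun x : ℤ => (x : ℝ)) h2
      push_cast at this
      linarith
    rw [hka]
    have h1 : Real.Gamma ((p : ℝ) + 1 + γ) = Real.Gamma (γ + 1) * asc (γ + 1) p := by
      rw [show (p : ℝ) + 1 + γ = (γ + 1) + p by ring, Gamma_asc _ hγ]
    have h2 : Real.Gamma ((p : ℝ) + 1) = Nat.factorial p := Real.Gamma_nat_eq_factorial p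
    rw [h1, h2]
    have hfac : ((Nat.factorial p : ℕ) : ℝ) ≠ 0 := Nat.cast_ne_zero.mpr p.factorial_ne_zero
    field_simp
  · rw [if_neg h, if_neg h]

lemma Hasc_neg_one (k a : ℤ) : Hasc (-1) k a = if k = a + 1 then 1 else 0 := by
  unfold Hasc
  by_cases h : 1 ≤ k - a
  · rw [if_pos h, show (-1 : ℝ) + 1 = 0 by ring, asc_zero_left]
    by_cases hk : k = a + 1
    · rw [if_pos hk, if_pos (by omega : (k - a - 1).toNat = 0)]
      simp [hk]
    · rw [if_neg hk, if_neg (by omega : ¬ (k - a - 1).toNat = 0)]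
      simp
  · rw [if_neg h, if_neg (by omega : ¬ k = a + 1)]

lemma H_shift (γ : ℝ) (k a c : ℤ) : H γ (k + c) (a + c) = H γ k a := by
  unfold H
  rw [show (k + c) - (a + c) = k - a by ring,
    show ((k + c : ℤ) : ℝ) - ((a + c : ℤ) : ℝ) = (k : ℝ) - a by push_cast; ring]

lemma sum_Icc_eq_sum_range {M : Type*} [AddCommMonoid M] (F : ℤ → M) (a k : ℤ) :
    ∑ s ∈ Finset.Icc a k, F s = ∑ q ∈ Finset.range (k + 1 - a).toNat, F (a + q) := by
  refine Finset.sum_nbij' (fun s => (s - a).toNat) (fun q => a + (q : ℤ)) ?_ ?_ ?_ ?_ ?_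
  · intro s hs
    simp only [Finset.mem_Icc] at hs
    simp only [Finset.mem_range]
    omega
  · intro q hq
    simp only [Finset.mem_range] at hq
    simp only [Finset.mem_Icc]
    omega
  · intro s hs
    simp only [Finset.mem_Icc] at hs
    omega
  · intro q hq
    simp only [Finset.mem_range] at hq
    omega
  · intro s hs
    simp only [Finset.mem_Icc] at hs
    congr 2
    omega

lemma sum_Icc_shift {M : Type*} [AddCommMonoid M] (F : ℤ → M) (a b c : ℤ) :
    ∑ s ∈ Finset.Icc a b, F s = ∑ u ∈ Finset.Icc (a - c) (b - c), F (u + c) := by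
  refine Finset.sum_nbij' (fun s => s - c) (fun u => u + c) ?_ ?_ ?_ ?_ ?_
  · intro s hs
    simp only [Finset.mem_Icc] at hs ⊢
    omega
  · intro u hu
    simp only [Finset.mem_Icc] at hu ⊢
    omega
  · intro s _; omega
  · intro u _; omega
  · intro s hs
    congr 1
    omega

/-- The fundamental convolution identity. -/
lemma conv (α γ : ℝ) (hα : Real.Gamma (-α) ≠ 0) (hγ : Real.Gamma (γ + 1) ≠ 0) (a k : ℤ) :
    ∑ s ∈ Finset.Icc (a + 1) k, H (-α - 1) k (s - 1) * H γ s a = Hasc (γ - α) k a := by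
  by_cases hk : a + 1 ≤ k
  swap
  · rw [Finset.Icc_eq_empty (by omega), Finset.sum_empty, Hasc,
      if_neg (by omega : ¬ 1 ≤ k - a)]
  · set n : ℕ := (k - a - 1).toNat with hn
    have hkan : k - a = (n : ℤ) + 1 := by omega
    rw [sum_Icc_eq_sum_range]
    have hrange : (k + 1 - (a + 1)).toNat = n + 1 := by omega
    rw [hrange]
    have hterm : ∀ q ∈ Finset.range (n + 1),
        H (-α - 1) k (a + 1 + (q : ℤ) - 1) * H γ (a + 1 + (q : ℤ)) a
          = (asc (γ + 1) q / Nat.factorial q) * (asc (-α) (n - q) / Nat.factorial (n - q)) := by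
      intro q hq
      rw [Finset.mem_range] at hq
      have hqn : q ≤ n := by omega
      rw [show a + 1 + (q : ℤ) - 1 = a + q by ring]
      rw [H_eq_Hasc _ (by rw [show -α - 1 + 1 = -α by ring]; exact hα) k (a + q),
        H_eq_Hasc _ hγ]
      unfold Hasc
      rw [if_pos (by omega : (1 : ℤ) ≤ k - (a + (q : ℤ))),
        if_pos (by omega : (1 : ℤ) ≤ a + 1 + (q : ℤ) - a)]
      rw [show -α - 1 + 1 = -α by ring]
      rw [show (k - (a + (q : ℤ)) - 1).toNat = n - q by omega,
        show (a + 1 + (q : ℤ) - a - 1).toNat = q by omega]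
      ring
    rw [Finset.sum_congr rfl hterm]
    have hvdm := vandermonde (γ + 1) (-α) n
    have hfin : ∀ q ∈ Finset.range (n + 1),
        (asc (γ + 1) q / Nat.factorial q) * (asc (-α) (n - q) / Nat.factorial (n - q))
          = (n.choose q : ℝ) * (asc (γ + 1) q * asc (-α) (n - q)) / Nat.factorial n := by
      intro q hq
      rw [Finset.mem_range] at hq
      have hqn : q ≤ n := by omega
      rw [Nat.cast_choose ℝ hqn]
      have h1 : (Nat.factorial q : ℝ) ≠ 0 := Nat.cast_ne_zero.mpr q.factorial_ne_zero
      have h2 : (Nat.factorial (n - q) : ℝ) ≠ 0 := Nat.cast_ne_zero.mpr (n - q).factorial_ne_zero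
      have h3 : (Nat.factorial n : ℝ) ≠ 0 := Nat.cast_ne_zero.mpr n.factorial_ne_zero
      field_simp
    rw [Finset.sum_congr rfl hfin, ← Finset.sum_div, hvdm]
    unfold Hasc
    rw [if_pos (by omega : (1 : ℤ) ≤ k - a), ← hn]
    rw [show γ - α + 1 = γ + 1 + -α by ring]

/-! ### The series `E` -/

section E

variable {n : ℕ} (α : ℝ) (r : ℤ) (M N : Matrix (Fin n) (Fin n) ℝ)

/-- The single summand family. -/
noncomputable def fam (m : ℤ) (i : ℕ) : Matrix (Fin n) (Fin n) ℝ :=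
  ∑ j ∈ Finset.range (m + r).toNat, H ((i : ℝ) * α + α - 1) m (((j : ℤ) - 1) * r) • Q M N i j

/-- The series defining `D` (without the special cases). -/
noncomputable def E (m : ℤ) : Matrix (Fin n) (Fin n) ℝ := ∑' i : ℕ, fam α r M N m i

variable {α r}

lemma hineq (hr : 2 ≤ r) (m' : ℤ) (j : ℕ) (hj : (m' + r).toNat ≤ j) :
    m' ≤ ((j : ℤ) - 1) * r := by
  have hj0 : (0 : ℤ) ≤ (j : ℤ) := Int.ofNat_nonneg j
  rcases le_or_gt (m' + r) 0 with h | h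
  · nlinarith
  · have : m' + r ≤ (j : ℤ) := by omega
    nlinarith

lemma H_vanish (hr : 2 ≤ r) (γ' : ℝ) (m' : ℤ) (j : ℕ) (hj : (m' + r).toNat ≤ j) :
    H γ' m' (((j : ℤ) - 1) * r) = 0 :=
  H_of_nonpos _ (by have := hineq hr m' j hj; omega)

lemma sum_ext (hr : 2 ≤ r) (γ' : ℝ) (m' : ℤ) (i : ℕ) (B : ℕ) (hB : (m' + r).toNat ≤ B) :
    ∑ j ∈ Finset.range B, H γ' m' (((j : ℤ) - 1) * r) • Q M N i j
      = ∑ j ∈ Finset.range (m' + r).toNat, H γ' m' (((j : ℤ) - 1) * r) • Q M N i j := by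
  refine (Finset.sum_subset (Finset.range_subset_range.mpr hB) ?_).symm
  intro j _ hj
  rw [Finset.mem_range, not_lt] at hj
  rw [H_vanish hr _ _ _ hj, zero_smul]

lemma E_of_le (m : ℤ) (hm : m ≤ -r) : E α r M N m = 0 := by
  unfold E fam
  have : (m + r).toNat = 0 := by omega
  rw [this]
  simp

lemma D_eq_E (hr : 2 ≤ r) (m : ℤ) (hm : 1 - r ≤ m) : D α α r M N m = E α r M N m := by
  unfold D E fam
  rw [if_neg (by omega), if_neg (by omega)]

lemma summable_fam (hr : 2 ≤ r)
    (hconv : ∀ k : ℤ, 1 - r ≤ k → ∀ j : ℕ, ∀ x y : Fin n,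
      Summable fun i : ℕ =>
        |(H ((i : ℝ) * α + α - 1) k (((j : ℤ) - 1) * r) • Q M N i j) x y|)
    (m : ℤ) : Summable (fam α r M N m) := by
  rcases le_or_gt m (-r) with h | h
  · have : ∀ i, fam α r M N m i = 0 := by
      intro i
      unfold fam
      rw [show (m + r).toNat = 0 by omega]
      simp
    exact summable_zero.congr (fun i => (this i).symm)
  · have hm : 1 - r ≤ m := by omega
    unfold fam
    apply summable_sum
    intro j _
    refine Pi.summable.mpr ?_
    intro x
    rw [Pi.summable]
    intro y
    exact (hconv m hm j x y).of_abs

end E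

/-! ### The core lemma: `E` solves the homogeneous equation with an impulse -/

lemma core {n : ℕ} (α : ℝ) (hα0 : 0 < α) (hα1 : α < 1) (r : ℤ) (hr : 2 ≤ r)
    (M N : Matrix (Fin n) (Fin n) ℝ)
    (hconv : ∀ k : ℤ, 1 - r ≤ k → ∀ j : ℕ, ∀ x y : Fin n,
      Summable fun i : ℕ =>
        |(H ((i : ℝ) * α + α - 1) k (((j : ℤ) - 1) * r) • Q M N i j) x y|)
    (m : ℤ) (hm : 1 - r ≤ m) :
    ∑ u ∈ Finset.Icc (1 - r) m, H (-α - 1) m (u - 1) • E α r M N u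
      = M * E α r M N m + N * E α r M N (m - r)
        + (if m = 1 - r then (1 : Matrix (Fin n) (Fin n) ℝ) else 0) := by
  have hΓα : Real.Gamma (-α) ≠ 0 := by
    apply Real.Gamma_ne_zero
    intro mm
    rcases Nat.eq_zero_or_pos mm with h | h
    · subst h; push_cast; linarith
    · have : (1 : ℝ) ≤ (mm : ℝ) := by exact_mod_cast h
      push_cast
      intro hcontr
      linarith
  have hΓi : ∀ i : ℕ, Real.Gamma ((i : ℝ) * α + α - 1 + 1) ≠ 0 := by
    intro i
    have : (0 : ℝ) < (i : ℝ) * α + α - 1 + 1 := by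
      have : (0 : ℝ) ≤ (i : ℝ) := Nat.cast_nonneg i
      nlinarith
    exact (Real.Gamma_pos_of_pos this).ne'
  -- Step 1: pull the smul inside the tsum and swap sums
  have step1 : ∀ u ∈ Finset.Icc (1 - r) m, H (-α - 1) m (u - 1) • E α r M N u
      = ∑' i : ℕ, H (-α - 1) m (u - 1) • fam α r M N u i := by
    intro u _
    exact (tsum_const_smul'' _).symm
  rw [Finset.sum_congr rfl step1,
    ← Summable.tsum_finsetSum (fun u _ => (summable_fam M N hr hconv u).const_smul _)]
  -- Step 2: per-i evaluation via the convolution identity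
  have stepI : ∀ i : ℕ, (∑ u ∈ Finset.Icc (1 - r) m, H (-α - 1) m (u - 1) • fam α r M N u i)
      = ∑ j ∈ Finset.range (m + r).toNat,
          Hasc ((i : ℝ) * α - 1) m (((j : ℤ) - 1) * r) • Q M N i j := by
    intro i
    have h1 : ∀ u ∈ Finset.Icc (1 - r) m, H (-α - 1) m (u - 1) • fam α r M N u i
        = ∑ j ∈ Finset.range (m + r).toNat,
            (H (-α - 1) m (u - 1) * H ((i : ℝ) * α + α - 1) u (((j : ℤ) - 1) * r)) • Q M N i j := by
      intro u hu
      rw [Finset.mem_Icc] at hu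
      have hB : (u + r).toNat ≤ (m + r).toNat := by omega
      unfold fam
      rw [← sum_ext (M := M) (N := N) hr _ u i _ hB, Finset.smul_sum]
      exact Finset.sum_congr rfl (fun j _ => smul_smul _ _ _)
    rw [Finset.sum_congr rfl h1, Finset.sum_comm]
    refine Finset.sum_congr rfl (fun j _ => ?_)
    rw [← Finset.sum_smul]
    congr 1
    have hj0 : (0 : ℤ) ≤ (j : ℤ) := Int.ofNat_nonneg j
    have haj : -r ≤ ((j : ℤ) - 1) * r := by nlinarith
    have hshrink : ∑ u ∈ Finset.Icc (1 - r) m,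
        H (-α - 1) m (u - 1) * H ((i : ℝ) * α + α - 1) u (((j : ℤ) - 1) * r)
        = ∑ u ∈ Finset.Icc (((j : ℤ) - 1) * r + 1) m,
            H (-α - 1) m (u - 1) * H ((i : ℝ) * α + α - 1) u (((j : ℤ) - 1) * r) := by
      refine (Finset.sum_subset ?_ ?_).symm
      · intro u hu
        rw [Finset.mem_Icc] at hu ⊢
        omega
      · intro u hu hnu
        rw [Finset.mem_Icc] at hu
        rw [Finset.mem_Icc, not_and_or, not_le, not_le] at hnu
        have hule : u ≤ ((j : ℤ) - 1) * r := by omega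
        rw [H_of_nonpos ((i : ℝ) * α + α - 1) (k := u) (a := ((j : ℤ) - 1) * r) (by omega),
          mul_zero]
    rw [hshrink, conv α _ hΓα (hΓi i) _ m]
    congr 1
    ring
  rw [tsum_congr stepI]
  -- Step 3: the split into i = 0 and i ≥ 1
  have hJ : ∃ K : ℕ, (m + r).toNat = K + 1 := ⟨(m + r).toNat - 1, by omega⟩
  obtain ⟨K, hK⟩ := hJ
  have hTs : ∀ i : ℕ, (∑ j ∈ Finset.range (m + r).toNat,
        Hasc (((i + 1 : ℕ) : ℝ) * α - 1) m (((j : ℤ) - 1) * r) • Q M N i.succ j)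
      = M * fam α r M N m i + N * fam α r M N (m - r) i := by
    intro i
    have hc : ∀ j : ℕ, Hasc (((i + 1 : ℕ) : ℝ) * α - 1) m (((j : ℤ) - 1) * r)
        = H ((i : ℝ) * α + α - 1) m (((j : ℤ) - 1) * r) := by
      intro j
      rw [H_eq_Hasc _ (hΓi i)]
      congr 1
      push_cast; ring
    calc (∑ j ∈ Finset.range (m + r).toNat,
          Hasc (((i + 1 : ℕ) : ℝ) * α - 1) m (((j : ℤ) - 1) * r) • Q M N i.succ j)
        = ∑ j ∈ Finset.range (K + 1),
            H ((i : ℝ) * α + α - 1) m (((j : ℤ) - 1) * r) • Q M N (i + 1) j := by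
          rw [hK]
          exact Finset.sum_congr rfl (fun j _ => by rw [hc j])
      _ = (∑ j ∈ Finset.range K,
            H ((i : ℝ) * α + α - 1) m ((((j + 1 : ℕ) : ℤ) - 1) * r) • Q M N (i + 1) (j + 1))
          + H ((i : ℝ) * α + α - 1) m ((((0 : ℕ) : ℤ) - 1) * r) • Q M N (i + 1) 0 := by
          rw [Finset.sum_range_succ' _ K]
      _ = M * fam α r M N m i + N * fam α r M N (m - r) i := by
          have hq1 : ∀ j : ℕ, Q M N (i + 1) (j + 1) = M * Q M N i (j + 1) + N * Q M N i j :=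
            fun j => rfl
          have hq0 : Q M N (i + 1) 0 = M * Q M N i 0 := rfl
          simp only [hq1, hq0, smul_add]
          rw [Finset.sum_add_distrib]
          have e1 : (∑ j ∈ Finset.range K,
              H ((i : ℝ) * α + α - 1) m ((((j + 1 : ℕ) : ℤ) - 1) * r) • (M * Q M N i (j + 1)))
              + H ((i : ℝ) * α + α - 1) m ((((0 : ℕ) : ℤ) - 1) * r) • (M * Q M N i 0)
              = M * fam α r M N m i := by
            unfold fam
            rw [hK, Finset.sum_range_succ' _ K, mul_add, Finset.mul_sum]
            congr 1
            · exact Finset.sum_congr rfl (fun j _ => (mul_smul_comm _ _ _).symm)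
            · exact (mul_smul_comm _ _ _).symm
          have e2 : (∑ j ∈ Finset.range K,
              H ((i : ℝ) * α + α - 1) m ((((j + 1 : ℕ) : ℤ) - 1) * r) • (N * Q M N i j))
              = N * fam α r M N (m - r) i := by
            have hsh : ∀ j : ℕ, H ((i : ℝ) * α + α - 1) m ((((j + 1 : ℕ) : ℤ) - 1) * r)
                = H ((i : ℝ) * α + α - 1) (m - r) (((j : ℤ) - 1) * r) := by
              intro j
              rw [show m = (m - r) + r by ring]
              rw [show (((j + 1 : ℕ) : ℤ) - 1) * r = ((j : ℤ) - 1) * r + r by push_cast; ring]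
              rw [H_shift]
              rw [show m - r + r - r = m - r by ring]
            simp only [hsh]
            unfold fam
            rw [← sum_ext (M := M) (N := N) hr ((i : ℝ) * α + α - 1) (m - r) i K (by omega),
              Finset.mul_sum]
            exact Finset.sum_congr rfl (fun j _ => (mul_smul_comm _ _ _).symm)
          rw [add_right_comm]
          rw [e1]
          rw [e2]
  -- Step 4: evaluate the `i = 0` term
  have hT0 : (∑ j ∈ Finset.range (m + r).toNat,
      Hasc (((0 : ℕ) : ℝ) * α - 1) m (((j : ℤ) - 1) * r) • Q M N 0 j)
      = (if m = 1 - r then (1 : Matrix (Fin n) (Fin n) ℝ) else 0) := by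
    have hz : ∀ j : ℕ, Hasc (((0 : ℕ) : ℝ) * α - 1) m (((j : ℤ) - 1) * r)
        = if m = ((j : ℤ) - 1) * r + 1 then 1 else 0 := by
      intro j
      rw [show ((0 : ℕ) : ℝ) * α - 1 = -1 by push_cast; ring, Hasc_neg_one]
    rw [Finset.sum_congr rfl (fun j _ => by rw [hz j])]
    rw [Finset.sum_eq_single_of_mem 0 (Finset.mem_range.mpr (by omega))
      (fun j _ hj => ?_)]
    · rw [show (((0 : ℕ) : ℤ) - 1) * r + 1 = 1 - r by push_cast; ring]
      by_cases hb : m = 1 - r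
      · rw [if_pos hb, if_pos hb, show Q M N 0 0 = (1 : Matrix (Fin n) (Fin n) ℝ) from rfl,
          one_smul]
      · rw [if_neg hb, if_neg hb, zero_smul]
    · obtain ⟨j', rfl⟩ := Nat.exists_eq_succ_of_ne_zero hj
      rw [show Q M N 0 (j' + 1) = 0 from rfl, smul_zero]
  -- Step 5: summability bookkeeping
  have hc1 : Continuous fun A : Matrix (Fin n) (Fin n) ℝ => M * A :=
    continuous_const.matrix_mul continuous_id
  have hc2 : Continuous fun A : Matrix (Fin n) (Fin n) ℝ => N * A :=
    continuous_const.matrix_mul continuous_id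
  have hsumm1 : Summable (fun i : ℕ => M * fam α r M N m i) :=
    ((summable_fam M N hr hconv m).map (AddMonoidHom.mulLeft M) hc1).congr (fun _ => rfl)
  have hsumm2 : Summable (fun i : ℕ => N * fam α r M N (m - r) i) :=
    ((summable_fam M N hr hconv (m - r)).map (AddMonoidHom.mulLeft N) hc2).congr (fun _ => rfl)
  have hsucc : Summable (fun i : ℕ => ∑ j ∈ Finset.range (m + r).toNat,
      Hasc (((i + 1 : ℕ) : ℝ) * α - 1) m (((j : ℤ) - 1) * r) • Q M N i.succ j) :=
    (hsumm1.add hsumm2).congr (fun i => (hTs i).symm)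
  have hF : Summable (fun i : ℕ => ∑ j ∈ Finset.range (m + r).toNat,
      Hasc ((i : ℝ) * α - 1) m (((j : ℤ) - 1) * r) • Q M N i j) := by
    apply (summable_nat_add_iff 1).mp
    exact hsucc.congr (fun i => rfl)
  -- Step 6: assemble
  rw [Summable.tsum_eq_zero_add hF]
  have hrest : ∑' i : ℕ, (∑ j ∈ Finset.range (m + r).toNat,
      Hasc (((i + 1 : ℕ) : ℝ) * α - 1) m (((j : ℤ) - 1) * r) • Q M N (i + 1) j)
      = M * E α r M N m + N * E α r M N (m - r) := by
    rw [tsum_congr hTs, Summable.tsum_add hsumm1 hsumm2]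
    have hmap1 : ∑' i : ℕ, M * fam α r M N m i = M * E α r M N m :=
      (((summable_fam M N hr hconv m).hasSum.map (AddMonoidHom.mulLeft M) hc1).tsum_eq)
    have hmap2 : ∑' i : ℕ, N * fam α r M N (m - r) i = N * E α r M N (m - r) :=
      (((summable_fam M N hr hconv (m - r)).hasSum.map (AddMonoidHom.mulLeft N) hc2).tsum_eq)
    rw [hmap1, hmap2]
  rw [hT0, hrest]
  abel

lemma H_congr (γ : ℝ) {k a k' a' : ℤ} (h : k - a = k' - a') : H γ k a = H γ k' a' := by
  unfold H
  have hre : (k : ℝ) - a = (k' : ℝ) - a' := by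
    have := congrArg (fun x : ℤ => (x : ℝ)) h
    push_cast at this
    linarith
  rw [h, hre]

lemma sum_mulVec {n : ℕ} {ι : Type*} (s : Finset ι) (g : ι → Matrix (Fin n) (Fin n) ℝ)
    (v : Fin n → ℝ) : (∑ i ∈ s, g i) *ᵥ v = ∑ i ∈ s, g i *ᵥ v := by
  classical
  induction s using Finset.induction_on with
  | empty => simp
  | insert _ _ h ih => rw [Finset.sum_insert h, Finset.sum_insert h, Matrix.add_mulVec, ih]

lemma mulVec_sum {n : ℕ} {ι : Type*} (s : Finset ι) (A : Matrix (Fin n) (Fin n) ℝ)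
    (g : ι → Fin n → ℝ) : A *ᵥ (∑ i ∈ s, g i) = ∑ i ∈ s, A *ᵥ g i := by
  classical
  induction s using Finset.induction_on with
  | empty => simp
  | insert _ _ h ih => rw [Finset.sum_insert h, Finset.sum_insert h, Matrix.mulVec_add, ih]

end DDP


/-- The function `z(k) = Σ_{s=1}^{k} D(k-r-s+1)·f(s)` (and `z(k) = 0` for `k ≤ 0`)
solves the nonhomogeneous nabla Riemann–Liouville fractional delayed difference system with
zero initial data: `z(k) = 0` on `1-r ≤ k ≤ 0` and
`∇_{-r}^{α} z(k) = M·z(k) + N·z(k-r) + f(k)` for `k ≥ 1`. -/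
theorem solves_nonhomogeneous_system_zero_data {n : ℕ} (α : ℝ) (hα0 : 0 < α) (hα1 : α < 1)
    (r : ℤ) (hr : 2 ≤ r) (M N : Matrix (Fin n) (Fin n) ℝ) (f : ℤ → Fin n → ℝ)
    (hconv : ∀ k : ℤ, 1 - r ≤ k → ∀ j : ℕ, ∀ x y : Fin n,
      Summable fun i : ℕ =>
        |(H ((i : ℝ) * α + α - 1) k (((j : ℤ) - 1) * r) • Q M N i j) x y|)
    (z : ℤ → Fin n → ℝ)
    (hz1 : ∀ k : ℤ, 1 ≤ k →
      z k = ∑ s ∈ Finset.Icc 1 k, D α α r M N (k - r - s + 1) *ᵥ f s)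
    (hz0 : ∀ k : ℤ, k ≤ 0 → z k = 0) :
    (∀ k : ℤ, 1 - r ≤ k → k ≤ 0 → z k = 0) ∧
      (∀ k : ℤ, 1 ≤ k →
        ∑ s ∈ Finset.Icc (1 - r) k, H (-α - 1) k (s - 1) • z s
          = M *ᵥ z k + N *ᵥ z (k - r) + f k) := by
  constructor
  · exact fun k _ h2 => hz0 k h2
  intro k hk
  have hzE : ∀ s ∈ Finset.Icc (1 - r) k,
      z s = ∑ t ∈ Finset.Icc 1 s, DDP.E α r M N (s - r - t + 1) *ᵥ f t := by
    intro s _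
    rcases le_or_gt s 0 with h | h
    · rw [hz0 s h, Finset.Icc_eq_empty (by omega), Finset.sum_empty]
    · rw [hz1 s h]
      refine Finset.sum_congr rfl (fun t ht => ?_)
      rw [Finset.mem_Icc] at ht
      rw [DDP.D_eq_E M N hr _ (by omega)]
  calc ∑ s ∈ Finset.Icc (1 - r) k, H (-α - 1) k (s - 1) • z s
      = ∑ s ∈ Finset.Icc (1 - r) k, ∑ t ∈ Finset.Icc 1 k,
          (if t ≤ s then H (-α - 1) k (s - 1) • (DDP.E α r M N (s - r - t + 1) *ᵥ f t)
           else 0) := by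
        refine Finset.sum_congr rfl (fun s hs => ?_)
        have hs' := Finset.mem_Icc.mp hs
        rw [hzE s hs, Finset.smul_sum]
        rw [← Finset.sum_subset (Finset.Icc_subset_Icc_right hs'.2) (fun t ht hnt => ?_)]
        · exact Finset.sum_congr rfl
            (fun t ht => (if_pos (Finset.mem_Icc.mp ht).2).symm)
        · rw [Finset.mem_Icc] at ht
          rw [if_neg (by rw [Finset.mem_Icc] at hnt; omega)]
    _ = ∑ t ∈ Finset.Icc 1 k, ∑ s ∈ Finset.Icc (1 - r) k,
          (if t ≤ s then H (-α - 1) k (s - 1) • (DDP.E α r M N (s - r - t + 1) *ᵥ f t)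
           else 0) := Finset.sum_comm
    _ = ∑ t ∈ Finset.Icc 1 k,
          (M *ᵥ (DDP.E α r M N (k - r - t + 1) *ᵥ f t)
            + N *ᵥ (DDP.E α r M N (k - r - t + 1 - r) *ᵥ f t)
            + (if t = k then f t else 0)) := by
        refine Finset.sum_congr rfl (fun t ht => ?_)
        have ht' := Finset.mem_Icc.mp ht
        calc ∑ s ∈ Finset.Icc (1 - r) k,
              (if t ≤ s then H (-α - 1) k (s - 1) • (DDP.E α r M N (s - r - t + 1) *ᵥ f t)
               else 0)
            = ∑ s ∈ Finset.Icc t k,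
                (if t ≤ s then H (-α - 1) k (s - 1) • (DDP.E α r M N (s - r - t + 1) *ᵥ f t)
                 else 0) := by
              refine (Finset.sum_subset (Finset.Icc_subset_Icc_left (by omega)) ?_).symm
              intro s hsm hns
              rw [Finset.mem_Icc] at hsm
              rw [if_neg (by rw [Finset.mem_Icc] at hns; omega)]
          _ = ∑ s ∈ Finset.Icc t k,
                H (-α - 1) k (s - 1) • (DDP.E α r M N (s - r - t + 1) *ᵥ f t) :=
              Finset.sum_congr rfl (fun s hs => if_pos (Finset.mem_Icc.mp hs).1)
          _ = ∑ u ∈ Finset.Icc (1 - r) (k - (t - 1 + r)),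
                H (-α - 1) k (u + (t - 1 + r) - 1)
                  • (DDP.E α r M N (u + (t - 1 + r) - r - t + 1) *ᵥ f t) := by
              rw [DDP.sum_Icc_shift _ t k (t - 1 + r),
                show t - (t - 1 + r) = 1 - r by ring]
          _ = ∑ u ∈ Finset.Icc (1 - r) (k - r - t + 1),
                (H (-α - 1) (k - r - t + 1) (u - 1) • DDP.E α r M N u) *ᵥ f t := by
              rw [show k - (t - 1 + r) = k - r - t + 1 by ring]
              refine Finset.sum_congr rfl (fun u hu => ?_)
              rw [show u + (t - 1 + r) - r - t + 1 = u by ring,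
                DDP.H_congr (-α - 1) (by ring :
                  k - (u + (t - 1 + r) - 1) = (k - r - t + 1) - (u - 1)),
                smul_mulVec]
          _ = (∑ u ∈ Finset.Icc (1 - r) (k - r - t + 1),
                H (-α - 1) (k - r - t + 1) (u - 1) • DDP.E α r M N u) *ᵥ f t :=
              (DDP.sum_mulVec _ _ _).symm
          _ = (M * DDP.E α r M N (k - r - t + 1) + N * DDP.E α r M N (k - r - t + 1 - r)
                + (if k - r - t + 1 = 1 - r then (1 : Matrix (Fin n) (Fin n) ℝ) else 0))
                *ᵥ f t := by
              rw [DDP.core α hα0 hα1 r hr M N hconv (k - r - t + 1) (by omega)]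
          _ = M *ᵥ (DDP.E α r M N (k - r - t + 1) *ᵥ f t)
              + N *ᵥ (DDP.E α r M N (k - r - t + 1 - r) *ᵥ f t)
              + (if t = k then f t else 0) := by
              rw [Matrix.add_mulVec, Matrix.add_mulVec, ← Matrix.mulVec_mulVec,
                ← Matrix.mulVec_mulVec]
              congr 1
              by_cases hb : t = k
              · rw [if_pos (by omega : k - r - t + 1 = 1 - r), if_pos hb, Matrix.one_mulVec]
              · rw [if_neg (by omega : ¬ k - r - t + 1 = 1 - r), if_neg hb,
                  Matrix.zero_mulVec]
    _ = M *ᵥ z k + N *ᵥ z (k - r) + f k := by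
        rw [Finset.sum_add_distrib, Finset.sum_add_distrib]
        have p1 : ∑ t ∈ Finset.Icc 1 k, M *ᵥ (DDP.E α r M N (k - r - t + 1) *ᵥ f t)
            = M *ᵥ z k := by
          rw [← DDP.mulVec_sum, hzE k (Finset.mem_Icc.mpr ⟨by omega, le_refl k⟩)]
        have p2 : ∑ t ∈ Finset.Icc 1 k, N *ᵥ (DDP.E α r M N (k - r - t + 1 - r) *ᵥ f t)
            = N *ᵥ z (k - r) := by
          rw [← DDP.mulVec_sum]
          by_cases hkr : 1 ≤ k - r
          · rw [hz1 (k - r) hkr]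
            have q : ∑ t ∈ Finset.Icc 1 k, DDP.E α r M N (k - r - t + 1 - r) *ᵥ f t
                = ∑ t ∈ Finset.Icc 1 (k - r), D α α r M N (k - r - r - t + 1) *ᵥ f t := by
              rw [← Finset.sum_subset (Finset.Icc_subset_Icc_right (by omega : k - r ≤ k))
                (fun t htm hnt => ?_)]
              · refine Finset.sum_congr rfl (fun t ht => ?_)
                rw [Finset.mem_Icc] at ht
                rw [show k - r - t + 1 - r = k - r - r - t + 1 by ring,
                  DDP.D_eq_E M N hr _ (by omega)]
              · rw [Finset.mem_Icc] at htm
                rw [DDP.E_of_le M N _ (by rw [Finset.mem_Icc] at hnt; omega),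
                  Matrix.zero_mulVec]
            rw [q]
          · rw [hz0 (k - r) (by omega)]
            have q : ∑ t ∈ Finset.Icc 1 k, DDP.E α r M N (k - r - t + 1 - r) *ᵥ f t
                = 0 := by
              refine Finset.sum_eq_zero (fun t ht => ?_)
              rw [Finset.mem_Icc] at ht
              rw [DDP.E_of_le M N _ (by omega), Matrix.zero_mulVec]
            rw [q]
        have p3 : (∑ t ∈ Finset.Icc 1 k, if t = k then f t else 0) = f k := by
          rw [Finset.sum_ite_eq' (Finset.Icc 1 k) k f,
            if_pos (Finset.mem_Icc.mpr ⟨hk, le_refl k⟩)]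
        rw [p1, p2, p3]
end
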